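/- arXiv:2004.08370 — 2 statements merged into one kernel-verified Lean document; each statement's English description precedes it below -/
import Mathlib

section
/- Let Γ be a graph and let α, α' be two distinct edges of Γ incident to the same pair of vertices (a double edge). Then the generalized Arnold ring R^r(Γ) is isomorphic to R^r(Γ∖α), the ring of the graph with α deleted. -/
/-- A graph with vertex type `V`, allowing multiple edges; each edge carries an
orientation, given by the ordered pair of its endpoints. -/
structure MGraph (V : Type) : Type 1 where
  E : Type
  ends : E → V × V

namespace MGraph

variable {V : Type}

/-- A graph is loopless if no edge has equal endpoints. -/
def Loopless (Γ : MGraph V) : Prop := ∀ e : Γ.E, (Γ.ends e).1 ≠ (Γ.ends e).2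

/-- A graph has no multiple edges if distinct edges have distinct (unordered) endpoint pairs. -/
def NoMultiple (Γ : MGraph V) : Prop :=
  ∀ e e' : Γ.E, (Γ.ends e = Γ.ends e' ∨ Γ.ends e = (Γ.ends e').swap) → e = e'

/-- The graph obtained by deleting the edge `α`. -/
def delete (Γ : MGraph V) (α : Γ.E) : MGraph V :=
  ⟨{e : Γ.E // e ≠ α}, fun e => Γ.ends e.1⟩

/-- The collapse map on vertices identifying the second endpoint of `α` with the first. -/
def collapse [DecidableEq V] (Γ : MGraph V) (α : Γ.E) : V → V :=
  fun v => if v = (Γ.ends α).2 then (Γ.ends α).1 else v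

/-- The graph obtained by contracting the edge `α` (keeping the ambient vertex type,
with both endpoints of `α` identified via the collapse map). -/
def contract [DecidableEq V] (Γ : MGraph V) (α : Γ.E) : MGraph V :=
  ⟨{e : Γ.E // e ≠ α}, fun e =>
    (Γ.collapse α (Γ.ends e.1).1, Γ.collapse α (Γ.ends e.1).2)⟩

/-- A circuit in a graph: a cyclic sequence of edges together with the
corresponding sequence of vertices. -/
structure Circuit (Γ : MGraph V) where
  len : ℕ
  len_pos : 0 < len
  edges : Fin len → Γ.E
  verts : Fin (len + 1) → V
  closed : verts (Fin.last len) = verts 0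
  incid : ∀ i : Fin len,
    Γ.ends (edges i) = (verts i.castSucc, verts i.succ) ∨
    Γ.ends (edges i) = (verts i.succ, verts i.castSucc)

open Classical in
/-- The sign of the `i`-th term of the Arnold class of a circuit: `(-1)^i` when `r`
is even, and the orientation sign `ε_i(w)` when `r` is odd. -/
noncomputable def Circuit.sign {Γ : MGraph V} (r : ℕ) (w : Γ.Circuit) (i : Fin w.len) : ℤ :=
  if Even r then (-1) ^ (i : ℕ)
  else if Γ.ends (w.edges i) = (w.verts i.castSucc, w.verts i.succ) then 1 else -1

/-- The defining relations of the free graded-commutative ring `Λ^r(Γ)` on one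
generator of degree `r-1` for each edge: graded commutativity (the generators commute
when `r` is odd and anticommute when `r` is even) and squares of generators vanish. -/
inductive LamRel (Γ : MGraph V) (r : ℕ) : FreeAlgebra ℤ Γ.E → FreeAlgebra ℤ Γ.E → Prop
  | comm (a b : Γ.E) : Γ.LamRel r (FreeAlgebra.ι ℤ a * FreeAlgebra.ι ℤ b)
      (((-1 : ℤ) ^ ((r - 1) * (r - 1))) • (FreeAlgebra.ι ℤ b * FreeAlgebra.ι ℤ a))
  | sq (a : Γ.E) : Γ.LamRel r (FreeAlgebra.ι ℤ a * FreeAlgebra.ι ℤ a) 0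

/-- The free graded-commutative ring `Λ^r(Γ)` over `ℤ` with one generator of degree
`r-1` for each edge of `Γ`. -/
def Lam (Γ : MGraph V) (r : ℕ) : Type := RingQuot (Γ.LamRel r)

instance (Γ : MGraph V) (r : ℕ) : Ring (Γ.Lam r) :=
  inferInstanceAs (Ring (RingQuot (Γ.LamRel r)))

/-- The generator `e_α` of `Λ^r(Γ)` corresponding to the edge `α`. -/
def gen (Γ : MGraph V) (r : ℕ) (e : Γ.E) : Γ.Lam r :=
  RingQuot.mkRingHom (Γ.LamRel r) (FreeAlgebra.ι ℤ e)

open Classical in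
/-- The Arnold class `A(w) = Σ_i ± w_1 ⋯ ŵ_i ⋯ w_{l(w)}` of a circuit `w`. -/
noncomputable def Circuit.arnold {Γ : MGraph V} (r : ℕ) (w : Γ.Circuit) : Γ.Lam r :=
  ∑ i : Fin w.len, w.sign r i •
    (((List.finRange w.len).filter (fun j => j ≠ i)).map (fun j => Γ.gen r (w.edges j))).prod

/-- The relations imposing the vanishing of all Arnold classes of circuits. -/
inductive ArnRel (Γ : MGraph V) (r : ℕ) : Γ.Lam r → Γ.Lam r → Prop
  | mk (w : Γ.Circuit) : Γ.ArnRel r (w.arnold r) 0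

/-- The generalized Arnold ring `R^r(Γ) = Λ^r(Γ)/I^r(Γ)`. -/
def R (Γ : MGraph V) (r : ℕ) : Type := RingQuot (Γ.ArnRel r)

noncomputable instance (Γ : MGraph V) (r : ℕ) : Ring (Γ.R r) :=
  inferInstanceAs (Ring (RingQuot (Γ.ArnRel r)))

/-- The quotient map `Λ^r(Γ) → R^r(Γ)`; an element of `Λ^r(Γ)` lies in the Arnold
ideal `I^r(Γ)` precisely when its image under this map is `0`. -/
noncomputable def toR (Γ : MGraph V) (r : ℕ) : Γ.Lam r →+* Γ.R r :=
  RingQuot.mkRingHom (Γ.ArnRel r)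

/-- The class of the generator `e_α` in `R^r(Γ)`. -/
noncomputable def genR (Γ : MGraph V) (r : ℕ) (e : Γ.E) : Γ.R r :=
  Γ.toR r (Γ.gen r e)

end MGraph

/-! Sending `e_α` to `±e_{α'}` and fixing the other generators turns every circuit of `Γ`
into a circuit of `Γ ∖ α` (replace `α` by `α'`) and its Arnold class into `±` the Arnold class
of that circuit, so it induces a ring map `R^r(Γ) → R^r(Γ ∖ α)`; the inclusion of edges induces
a map back. The Arnold relation of the two-edge circuit `(α, α')` says `e_α = ±e_{α'}` in
`R^r(Γ)`, which makes the two maps mutually inverse. The sign is `1` for even `r`, and for odd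
`r` records whether `α'` runs against `α`. -/

theorem List.prod_map_smul {ι S A : Type*} [CommMonoid S] [Monoid A] [MulAction S A]
    [IsScalarTower S A A] [SMulCommClass S A A] (l : List ι) (c : ι → S) (x : ι → A) :
    (l.map fun i => c i • x i).prod = (l.map c).prod • (l.map x).prod := by
  induction l with
  | nil => simp
  | cons a l ih => rw [map_cons, prod_cons, ih, smul_mul_smul_comm, map_cons, map_cons,
      prod_cons, prod_cons]

theorem List.prod_map_filter_ne_mul {ι M : Type*} [CommMonoid M] [DecidableEq ι]
    {l : List ι} (hl : l.Nodup) {i : ι} (hi : i ∈ l) (f : ι → M) :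
    ((l.filter fun j => j ≠ i).map f).prod * f i = (l.map f).prod := by
  rw [mul_comm, ← prod_map_erase f hi, hl.erase_eq_filter]
  congr 4 with j
  by_cases h : j = i <;> simp [h]

namespace MGraph

variable {V : Type}

section Presentations

variable {Γ : MGraph V} {r : ℕ} {A : Type*} [Ring A]

theorem gen_mul_gen_comm (a b : Γ.E) :
    Γ.gen r a * Γ.gen r b = ((-1 : ℤ) ^ ((r - 1) * (r - 1))) • (Γ.gen r b * Γ.gen r a) := by
  have h := RingQuot.mkRingHom_rel (LamRel.comm (Γ := Γ) (r := r) a b)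
  rwa [map_mul, map_zsmul, map_mul] at h

theorem gen_mul_self (a : Γ.E) : Γ.gen r a * Γ.gen r a = 0 := by
  have h := RingQuot.mkRingHom_rel (LamRel.sq (Γ := Γ) (r := r) a)
  rwa [map_mul, map_zero] at h

def Lam.lift (f : Γ.E → A)
    (hcomm : ∀ a b, f a * f b = ((-1 : ℤ) ^ ((r - 1) * (r - 1))) • (f b * f a))
    (hsq : ∀ a, f a * f a = 0) : Γ.Lam r →+* A :=
  RingQuot.lift ⟨(FreeAlgebra.lift ℤ f).toRingHom, fun x y h => by
    cases h with
    | comm a b =>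
      rw [AlgHom.toRingHom_eq_coe, RingHom.coe_coe, map_mul, map_zsmul, map_mul]
      simp only [FreeAlgebra.lift_ι_apply]
      exact hcomm a b
    | sq a =>
      rw [AlgHom.toRingHom_eq_coe, RingHom.coe_coe, map_mul, map_zero]
      simp only [FreeAlgebra.lift_ι_apply]
      exact hsq a⟩

theorem Lam.lift_gen (f : Γ.E → A)
    (hcomm : ∀ a b, f a * f b = ((-1 : ℤ) ^ ((r - 1) * (r - 1))) • (f b * f a))
    (hsq : ∀ a, f a * f a = 0) (e : Γ.E) :
    Lam.lift f hcomm hsq (Γ.gen r e) = f e :=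
  (RingQuot.lift_mkRingHom_apply _ _ _).trans (FreeAlgebra.lift_ι_apply f e)

theorem Lam.ringHom_ext {f g : Γ.Lam r →+* A} (h : ∀ e, f (Γ.gen r e) = g (Γ.gen r e)) :
    f = g :=
  RingQuot.ringQuot_ext f g <| RingHom.toIntAlgHom_injective <| FreeAlgebra.hom_ext <| funext h

theorem toR_arnold (w : Γ.Circuit) : Γ.toR r (w.arnold r) = 0 :=
  (RingQuot.mkRingHom_rel (ArnRel.mk w)).trans (map_zero _)

def R.lift (f : Γ.Lam r →+* A) (hf : ∀ w : Γ.Circuit, f (w.arnold r) = 0) : Γ.R r →+* A :=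
  RingQuot.lift ⟨f, fun x y h => by cases h; simp [hf]⟩

theorem R.lift_toR (f : Γ.Lam r →+* A) (hf : ∀ w : Γ.Circuit, f (w.arnold r) = 0)
    (x : Γ.Lam r) : R.lift f hf (Γ.toR r x) = f x :=
  RingQuot.lift_mkRingHom_apply _ _ _

theorem R.ringHom_ext {f g : Γ.R r →+* A} (h : ∀ e, f (Γ.genR r e) = g (Γ.genR r e)) :
    f = g :=
  RingQuot.ringQuot_ext f g <| Lam.ringHom_ext h

end Presentations

open Classical in
/-- The sign relating the generators of two edges whose endpoint pairs are `p` and `q`,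
where `q = p` or `q = p.swap`. -/
noncomputable def orientationSign (r : ℕ) (p q : V × V) : ℤ :=
  if Even r then 1 else if p = q then 1 else -1

theorem orientationSign_self (r : ℕ) (p : V × V) : orientationSign r p p = 1 := by
  simp [orientationSign]

theorem orientationSign_mul_self (r : ℕ) (p q : V × V) :
    orientationSign r p q * orientationSign r p q = 1 := by
  unfold orientationSign; split_ifs <;> rfl

structure EdgeMap (Γ Δ : MGraph V) where
  toFun : Γ.E → Δ.E
  ends_toFun : ∀ e, Δ.ends (toFun e) = Γ.ends e ∨ Δ.ends (toFun e) = (Γ.ends e).swap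

namespace EdgeMap

variable {Γ Δ : MGraph V} (f : EdgeMap Γ Δ) (r : ℕ)

noncomputable def sign (e : Γ.E) : ℤ := orientationSign r (Δ.ends (f.toFun e)) (Γ.ends e)

def mapCircuit (w : Γ.Circuit) : Δ.Circuit where
  len := w.len
  len_pos := w.len_pos
  edges := f.toFun ∘ w.edges
  verts := w.verts
  closed := w.closed
  incid i := by
    rcases f.ends_toFun (w.edges i) with h | h <;> rcases w.incid i with h' | h' <;>
      simp [h, h']

theorem sign_mapCircuit (hΓ : Γ.Loopless) (w : Γ.Circuit) (i : Fin w.len) :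
    (f.mapCircuit w).sign r i = f.sign r (w.edges i) * w.sign r i := by
  have hv : w.verts i.castSucc ≠ w.verts i.succ := by
    rcases w.incid i with h | h <;> have := hΓ (w.edges i) <;> rw [h] at this
    exacts [this, this.symm]
  simp only [Circuit.sign, sign, orientationSign, mapCircuit, Function.comp_apply]
  by_cases hr : Even r
  · simp [hr]
  · rcases f.ends_toFun (w.edges i) with h | h <;> rcases w.incid i with h' | h' <;>
      simp [hr, h, h', hv, hv.symm]

noncomputable def mapLam : Γ.Lam r →+* Δ.Lam r :=
  Lam.lift (fun e => f.sign r e • Δ.gen r (f.toFun e))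
    (fun a b => by
      rw [smul_mul_smul_comm, smul_mul_smul_comm, gen_mul_gen_comm, smul_comm,
        mul_comm (f.sign r a)])
    (fun a => by rw [smul_mul_smul_comm, gen_mul_self, smul_zero])

theorem mapLam_gen (e : Γ.E) : f.mapLam r (Γ.gen r e) = f.sign r e • Δ.gen r (f.toFun e) :=
  Lam.lift_gen _ _ _ e

theorem mapLam_arnold (hΓ : Γ.Loopless) (w : Γ.Circuit) :
    f.mapLam r (w.arnold r) =
      ((List.finRange w.len).map (f.sign r ∘ w.edges)).prod • (f.mapCircuit w).arnold r := by
  simp only [Circuit.arnold, map_sum, Finset.smul_sum, map_zsmul, map_list_prod, List.map_map]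
  refine Finset.sum_congr rfl fun i _ => ?_
  set c := f.sign r ∘ w.edges
  have hmap : (f.mapLam r ∘ fun j => Γ.gen r (w.edges j)) =
      fun j => c j • Δ.gen r ((f.mapCircuit w).edges j) := by
    funext j
    exact f.mapLam_gen r (w.edges j)
  rw [hmap, List.prod_map_smul, smul_smul, smul_smul, f.sign_mapCircuit r hΓ]
  congr 1
  set C := ((List.finRange w.len).filter fun j => j ≠ i).map c |>.prod
  change w.sign r i * C = _ * (c i * w.sign r i)
  -- `C = c i * ∏ⱼ c j` because `c i * c i = 1`
  have hprod := List.prod_map_filter_ne_mul (List.nodup_finRange w.len) (List.mem_finRange i) c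
  have hc : c i * c i = 1 := orientationSign_mul_self _ _ _
  linear_combination (c i * w.sign r i) * hprod - (w.sign r i * C) * hc

noncomputable def mapR (hΓ : Γ.Loopless) : Γ.R r →+* Δ.R r :=
  R.lift ((Δ.toR r).comp (f.mapLam r)) fun w => by
    rw [RingHom.comp_apply, f.mapLam_arnold r hΓ, map_zsmul, toR_arnold, smul_zero]

theorem mapR_genR (hΓ : Γ.Loopless) (e : Γ.E) :
    f.mapR r hΓ (Γ.genR r e) = f.sign r e • Δ.genR r (f.toFun e) := by
  rw [genR, mapR, R.lift_toR, RingHom.comp_apply, mapLam_gen, map_zsmul, genR]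

end EdgeMap

variable {Γ : MGraph V} {α α' : Γ.E}

theorem Loopless.delete (hΓ : Γ.Loopless) (α : Γ.E) : (Γ.delete α).Loopless :=
  fun e => hΓ e.1

def deleteIncl (Γ : MGraph V) (α : Γ.E) : EdgeMap (Γ.delete α) Γ :=
  ⟨Subtype.val, fun _ => Or.inl rfl⟩

@[simp] theorem deleteIncl_toFun (e : (Γ.delete α).E) : (deleteIncl Γ α).toFun e = e.1 := rfl

@[simp] theorem sign_deleteIncl (r : ℕ) (e : (Γ.delete α).E) : (deleteIncl Γ α).sign r e = 1 :=
  orientationSign_self r _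

section ReplaceEdge

variable (hne : α ≠ α') (hpar : Γ.ends α' = Γ.ends α ∨ Γ.ends α' = (Γ.ends α).swap)

open Classical in
noncomputable def replaceEdge : EdgeMap Γ (Γ.delete α) where
  toFun e := if h : e = α then ⟨α', hne.symm⟩ else ⟨e, h⟩
  ends_toFun e := by
    by_cases h : e = α
    · subst h; simpa [delete] using hpar
    · simp [delete, h]

theorem replaceEdge_self : (replaceEdge hne hpar).toFun α = ⟨α', hne.symm⟩ := dif_pos rfl

theorem replaceEdge_of_ne {e : Γ.E} (he : e ≠ α) : (replaceEdge hne hpar).toFun e = ⟨e, he⟩ :=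
  dif_neg he

theorem replaceEdge_val (e : (Γ.delete α).E) : (replaceEdge hne hpar).toFun e.1 = e :=
  dif_neg e.2

theorem sign_replaceEdge_self (r : ℕ) :
    (replaceEdge hne hpar).sign r α = orientationSign r (Γ.ends α') (Γ.ends α) := by
  rw [EdgeMap.sign, replaceEdge_self]
  rfl

theorem sign_replaceEdge_of_ne (r : ℕ) {e : Γ.E} (he : e ≠ α) :
    (replaceEdge hne hpar).sign r e = 1 := by
  rw [EdgeMap.sign, replaceEdge_of_ne hne hpar he]
  exact orientationSign_self r _

end ReplaceEdge

def pairCircuit (hpar : Γ.ends α' = Γ.ends α ∨ Γ.ends α' = (Γ.ends α).swap) : Γ.Circuit where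
  len := 2
  len_pos := two_pos
  edges := ![α, α']
  verts := ![(Γ.ends α).1, (Γ.ends α).2, (Γ.ends α).1]
  closed := rfl
  incid i := by
    fin_cases i
    · exact Or.inl rfl
    · rcases hpar with h | h
      · exact Or.inr (by simpa using h)
      · exact Or.inl (by simpa [Prod.swap] using h)

theorem genR_eq_orientationSign_smul (r : ℕ) (hΓ : Γ.Loopless)
    (hpar : Γ.ends α' = Γ.ends α ∨ Γ.ends α' = (Γ.ends α).swap) :
    Γ.genR r α = orientationSign r (Γ.ends α') (Γ.ends α) • Γ.genR r α' := by
  have h := toR_arnold (r := r) (pairCircuit hpar)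
  simp only [Circuit.arnold, Circuit.sign] at h
  erw [Fin.sum_univ_two] at h
  -- `h` now says `e_{α'} ∓ e_α = 0` in `R^r(Γ)`
  have hα := hΓ α
  rcases hpar with hp | hp <;> by_cases hr : Even r <;>
    simp [List.finRange_succ, pairCircuit, orientationSign, hp, hr, genR, Prod.ext_iff, hα,
      Ne.symm hα] at h ⊢ <;> grind

end MGraph

/-- If `α` and `α'` are two distinct edges of the loopless graph `Γ`
incident to the same pair of vertices, then `R^r(Γ) ≅ R^r(Γ∖α)`. -/
theorem double_edge_deletion_iso {V : Type} (Γ : MGraph V) (hΓ : Γ.Loopless)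
    (r : ℕ) (α α' : Γ.E) (hne : α ≠ α')
    (hpar : Γ.ends α' = Γ.ends α ∨ Γ.ends α' = (Γ.ends α).swap) :
    Nonempty (Γ.R r ≃+* (Γ.delete α).R r) := by
  open MGraph EdgeMap in
  refine ⟨.ofRingHom ((replaceEdge hne hpar).mapR r hΓ) ((deleteIncl Γ α).mapR r (hΓ.delete α))
    (R.ringHom_ext fun e => ?_) (R.ringHom_ext fun e => ?_)⟩
  · rw [RingHom.comp_apply, mapR_genR, sign_deleteIncl, one_smul, deleteIncl_toFun, mapR_genR,
      sign_replaceEdge_of_ne hne hpar r e.2, replaceEdge_val, one_smul, RingHom.id_apply]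
  · rw [RingHom.comp_apply, mapR_genR, map_zsmul, mapR_genR, sign_deleteIncl, one_smul,
      deleteIncl_toFun, RingHom.id_apply]
    by_cases he : e = α
    · subst he
      rw [sign_replaceEdge_self, replaceEdge_self, genR_eq_orientationSign_smul r hΓ hpar]
    · rw [sign_replaceEdge_of_ne hne hpar r he, replaceEdge_of_ne hne hpar he, one_smul]
end

section
/- For distinct edges α, β of a loopless graph Γ, the square relating deletion and contraction commutes: g_β ∘ i_α = (i_α ⊗ id) ∘ g_β as maps R^r(Γ∖α) → R^r(Γ/β) ⊗ e_β, where (Γ∖α)/β is identified with (Γ/β)∖α. -/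
/-!
Every element of `R^r(Γ∖α)` can be written as `i'(y) + i'(z)·e_β` with `y, z ∈ R^r((Γ∖α)∖β)`:
the set of such elements is an additive subgroup containing `1` and stable under right
multiplication by generators, because `e_β² = 0` and generators graded-commute. On such an
element both sides of the square are computed by the defining properties of `g_β` and `g'_β`,
once the pair `(i_α ∘ i', j ∘ p')` is known to factor through `(i_β, p_β)`; that factorisation
holds on generators, hence on the whole ring they generate.
-/

theorem AddSubgroup.eq_top_of_one_mem_of_mul_mem {A : Type*} [Ring A] {s : Set A}
    (hs : Subring.closure s = ⊤) (M : AddSubgroup A) (one_mem : (1 : A) ∈ M)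
    (mul_mem : ∀ x ∈ M, ∀ a ∈ s, x * a ∈ M) : M = ⊤ := by
  refine eq_top_iff.2 fun x _ => ?_
  have hx : x ∈ AddSubgroup.closure (Submonoid.closure s : Set A) := by
    rw [← Subring.mem_closure_iff, hs]; trivial
  refine (AddSubgroup.closure_le M).2 (fun y hy => ?_) hx
  induction hy using Submonoid.closure_induction_right with
  | one => exact one_mem
  | mul_right y _ a ha ih => exact mul_mem y ih a ha

theorem RingHom.range_le_range_of_closure_eq_top {A B C : Type*} [Ring A] [Ring B] [Ring C]
    {s : Set A} (hs : Subring.closure s = ⊤) (f : A →+* C) (g : B →+* C)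
    (h : ∀ a ∈ s, f a ∈ g.range) : f.range ≤ g.range := by
  rw [RingHom.range_eq_map, ← hs, RingHom.map_closure, Subring.closure_le]
  rintro _ ⟨a, ha, rfl⟩
  exact h a ha

theorem FreeAlgebra.closure_range_ι (X : Type*) :
    Subring.closure (Set.range (FreeAlgebra.ι ℤ : X → FreeAlgebra ℤ X)) = ⊤ := by
  rw [eq_top_iff]
  rintro x -
  induction x using FreeAlgebra.induction with
  | grade0 n => exact intCast_mem _ n
  | grade1 a => exact Subring.subset_closure ⟨a, rfl⟩
  | mul a b ha hb => exact mul_mem ha hb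
  | add a b ha hb => exact add_mem ha hb

namespace MGraph

variable {V : Type}

theorem gen_mul_gen (Δ : MGraph V) (r : ℕ) (a b : Δ.E) :
    Δ.gen r a * Δ.gen r b = ((-1 : ℤ) ^ ((r - 1) * (r - 1))) • (Δ.gen r b * Δ.gen r a) := by
  have h := RingQuot.mkRingHom_rel (LamRel.comm (Γ := Δ) (r := r) a b)
  rw [map_zsmul, map_mul, map_mul] at h
  exact h

theorem gen_mul_self_s8 (Δ : MGraph V) (r : ℕ) (a : Δ.E) : Δ.gen r a * Δ.gen r a = 0 := by
  have h := RingQuot.mkRingHom_rel (LamRel.sq (Γ := Δ) (r := r) a)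
  rw [map_zero, map_mul] at h
  exact h

theorem genR_mul_genR (Δ : MGraph V) (r : ℕ) (a b : Δ.E) :
    Δ.genR r a * Δ.genR r b = ((-1 : ℤ) ^ ((r - 1) * (r - 1))) • (Δ.genR r b * Δ.genR r a) := by
  rw [genR, genR, ← map_mul, gen_mul_gen, map_zsmul, map_mul]

theorem genR_mul_self (Δ : MGraph V) (r : ℕ) (a : Δ.E) : Δ.genR r a * Δ.genR r a = 0 := by
  rw [genR, ← map_mul, gen_mul_self_s8, map_zero]

theorem closure_range_genR (Δ : MGraph V) (r : ℕ) :
    Subring.closure (Set.range (Δ.genR r)) = ⊤ := by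
  let π : FreeAlgebra ℤ Δ.E →+* Δ.R r := (Δ.toR r).comp (RingQuot.mkRingHom (Δ.LamRel r))
  have hπ : Function.Surjective π :=
    (RingQuot.mkRingHom_surjective _).comp (RingQuot.mkRingHom_surjective _)
  have hgen : Set.range (Δ.genR r) = π '' Set.range (FreeAlgebra.ι ℤ) := by
    rw [← Set.range_comp]; rfl
  rw [hgen, ← RingHom.map_closure, FreeAlgebra.closure_range_ι, ← RingHom.range_eq_map,
    RingHom.range_eq_top.2 hπ]

theorem exists_eq_add_mul_genR (Δ : MGraph V) (r : ℕ) (b : Δ.E)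
    (i : (Δ.delete b).R r →+* Δ.R r) (hi : ∀ e, i ((Δ.delete b).genR r e) = Δ.genR r e.1)
    (x : Δ.R r) : ∃ y z, x = i y + i z * Δ.genR r b := by
  let φ : (Δ.delete b).R r × (Δ.delete b).R r →+ Δ.R r :=
    i.toAddMonoidHom.coprod ((AddMonoidHom.mulRight (Δ.genR r b)).comp i.toAddMonoidHom)
  have hφ : φ.range = ⊤ := by
    refine AddSubgroup.eq_top_of_one_mem_of_mul_mem (Δ.closure_range_genR r) _
      ⟨(1, 0), by simp [φ]⟩ ?_
    rintro _ ⟨⟨y, z⟩, rfl⟩ _ ⟨c, rfl⟩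
    by_cases hc : c = b
    · subst hc
      exact ⟨(0, y), by simp [φ, add_mul, mul_assoc, genR_mul_self]⟩
    · refine ⟨(y * (Δ.delete b).genR r ⟨c, hc⟩,
        ((-1 : ℤ) ^ ((r - 1) * (r - 1))) • (z * (Δ.delete b).genR r ⟨c, hc⟩)), ?_⟩
      have hic : i ((Δ.delete b).genR r ⟨c, hc⟩) = Δ.genR r c := hi _
      simp [φ, hic, add_mul, mul_assoc, genR_mul_genR Δ r b c,
        ((Commute.neg_one_left _).pow_left _).left_comm]
  obtain ⟨⟨y, z⟩, h⟩ : x ∈ φ.range := hφ ▸ AddSubgroup.mem_top x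
  exact ⟨y, z, h.symm⟩

end MGraph

theorem deletion_contraction_commute_general {V : Type} [DecidableEq V]
    (Γ : MGraph V) (r : ℕ) (α β : Γ.E) (hαβ : β ≠ α)
    -- the deletion map `i_α : R^r(Γ∖α) → R^r(Γ)`
    (iα : (Γ.delete α).R r →+* Γ.R r)
    (hiα : ∀ e : (Γ.delete α).E, iα ((Γ.delete α).genR r e) = Γ.genR r e.1)
    -- the component map `g_β : R^r(Γ) → R^r(Γ/β)`
    (iβ : (Γ.delete β).R r →+* Γ.R r)
    (hiβ : ∀ e : (Γ.delete β).E, iβ ((Γ.delete β).genR r e) = Γ.genR r e.1)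
    (pβ : (Γ.delete β).R r →+* (Γ.contract β).R r)
    (hpβ : ∀ e : (Γ.delete β).E, pβ ((Γ.delete β).genR r e) = (Γ.contract β).genR r e)
    (g : Γ.R r →+ (Γ.contract β).R r)
    (hg0 : ∀ y, g (iβ y) = 0) (hg1 : ∀ y, g (iβ y * Γ.genR r β) = pβ y)
    -- the component map `g'_β : R^r(Γ∖α) → R^r((Γ∖α)/β)` for the edge `β` of `Γ∖α`
    (i' : ((Γ.delete α).delete ⟨β, hαβ⟩).R r →+* (Γ.delete α).R r)
    (hi' : ∀ e, i' (((Γ.delete α).delete ⟨β, hαβ⟩).genR r e) = (Γ.delete α).genR r e.1)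
    (p' : ((Γ.delete α).delete ⟨β, hαβ⟩).R r →+* ((Γ.delete α).contract ⟨β, hαβ⟩).R r)
    (hp' : ∀ e, p' (((Γ.delete α).delete ⟨β, hαβ⟩).genR r e) =
      ((Γ.delete α).contract ⟨β, hαβ⟩).genR r e)
    (g' : (Γ.delete α).R r →+ ((Γ.delete α).contract ⟨β, hαβ⟩).R r)
    (hg0' : ∀ y, g' (i' y) = 0)
    (hg1' : ∀ y, g' (i' y * (Γ.delete α).genR r ⟨β, hαβ⟩) = p' y)
    -- the map `j = i_α ⊗ id : R^r((Γ∖α)/β) → R^r(Γ/β)` identifying `(Γ∖α)/β` with `(Γ/β)∖α`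
    (j : ((Γ.delete α).contract ⟨β, hαβ⟩).R r →+* (Γ.contract β).R r)
    (hj : ∀ (e : Γ.E) (h1 : e ≠ α) (h2 : (⟨e, h1⟩ : (Γ.delete α).E) ≠ ⟨β, hαβ⟩),
      j (((Γ.delete α).contract ⟨β, hαβ⟩).genR r ⟨⟨e, h1⟩, h2⟩) =
        (Γ.contract β).genR r ⟨e, fun he => h2 (Subtype.ext he)⟩) :
    ∀ x : (Γ.delete α).R r, g (iα x) = j (g' x) := by
  intro x
  obtain ⟨y, z, rfl⟩ := MGraph.exists_eq_add_mul_genR (Γ.delete α) r ⟨β, hαβ⟩ i' hi' x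
  have hlift : ((iα.comp i').prod (j.comp p')).range ≤ (iβ.prod pβ).range := by
    refine RingHom.range_le_range_of_closure_eq_top (MGraph.closure_range_genR _ r) _ _ ?_
    rintro _ ⟨e, rfl⟩
    refine ⟨(Γ.delete β).genR r ⟨e.1.1, fun h => e.2 (Subtype.ext h)⟩, Prod.ext ?_ ?_⟩
    · exact (hiβ _).trans (by rw [RingHom.prod_apply, RingHom.comp_apply, hi', hiα])
    · exact (hpβ _).trans ((hj e.1.1 e.1.2 e.2).symm.trans (congrArg j (hp' e).symm))
  obtain ⟨y₁, hy₁⟩ := hlift ⟨y, rfl⟩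
  obtain ⟨z₁, hz₁⟩ := hlift ⟨z, rfl⟩
  simp only [RingHom.prod_apply, Prod.ext_iff, RingHom.comp_apply] at hy₁ hz₁
  have hβ : iα ((Γ.delete α).genR r ⟨β, hαβ⟩) = Γ.genR r β := hiα _
  rw [map_add, map_mul, ← hy₁.1, ← hz₁.1, hβ, map_add, hg0, hg1, map_add, hg0', hg1',
    zero_add, zero_add, hz₁.2]

/-- For distinct edges `α, β` of a loopless graph `Γ`, deletion and
contraction commute: `g_β ∘ i_α = (i_α ⊗ id) ∘ g'_β` as maps
`R^r(Γ∖α) → R^r(Γ/β) ⊗ e_β ≅ R^r(Γ/β)`, where `(Γ∖α)/β` is identified with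
`(Γ/β)∖α` and `i_α ⊗ id` is the map `j` induced by this inclusion. All maps are
characterised by their values on generators, the component maps `g_β, g'_β` by the
defining properties `g(i(x)) = 0`, `g(i(x)·e_β) = p(x)`. -/
theorem deletion_contraction_commute {V : Type} [DecidableEq V]
    (Γ : MGraph V) (hΓ : Γ.Loopless) (r : ℕ) (α β : Γ.E) (hαβ : β ≠ α)
    -- the deletion map `i_α : R^r(Γ∖α) → R^r(Γ)`
    (iα : (Γ.delete α).R r →+* Γ.R r)
    (hiα : ∀ e : (Γ.delete α).E, iα ((Γ.delete α).genR r e) = Γ.genR r e.1)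
    -- the component map `g_β : R^r(Γ) → R^r(Γ/β)`
    (iβ : (Γ.delete β).R r →+* Γ.R r)
    (hiβ : ∀ e : (Γ.delete β).E, iβ ((Γ.delete β).genR r e) = Γ.genR r e.1)
    (pβ : (Γ.delete β).R r →+* (Γ.contract β).R r)
    (hpβ : ∀ e : (Γ.delete β).E, pβ ((Γ.delete β).genR r e) = (Γ.contract β).genR r e)
    (g : Γ.R r →+ (Γ.contract β).R r)
    (hg0 : ∀ y, g (iβ y) = 0) (hg1 : ∀ y, g (iβ y * Γ.genR r β) = pβ y)
    -- the component map `g'_β : R^r(Γ∖α) → R^r((Γ∖α)/β)` for the edge `β` of `Γ∖α`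
    (i' : ((Γ.delete α).delete ⟨β, hαβ⟩).R r →+* (Γ.delete α).R r)
    (hi' : ∀ e, i' (((Γ.delete α).delete ⟨β, hαβ⟩).genR r e) = (Γ.delete α).genR r e.1)
    (p' : ((Γ.delete α).delete ⟨β, hαβ⟩).R r →+* ((Γ.delete α).contract ⟨β, hαβ⟩).R r)
    (hp' : ∀ e, p' (((Γ.delete α).delete ⟨β, hαβ⟩).genR r e) =
      ((Γ.delete α).contract ⟨β, hαβ⟩).genR r e)
    (g' : (Γ.delete α).R r →+ ((Γ.delete α).contract ⟨β, hαβ⟩).R r)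
    (hg0' : ∀ y, g' (i' y) = 0)
    (hg1' : ∀ y, g' (i' y * (Γ.delete α).genR r ⟨β, hαβ⟩) = p' y)
    -- the map `j = i_α ⊗ id : R^r((Γ∖α)/β) → R^r(Γ/β)` identifying `(Γ∖α)/β` with `(Γ/β)∖α`
    (j : ((Γ.delete α).contract ⟨β, hαβ⟩).R r →+* (Γ.contract β).R r)
    (hj : ∀ (e : Γ.E) (h1 : e ≠ α) (h2 : (⟨e, h1⟩ : (Γ.delete α).E) ≠ ⟨β, hαβ⟩),
      j (((Γ.delete α).contract ⟨β, hαβ⟩).genR r ⟨⟨e, h1⟩, h2⟩) =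
        (Γ.contract β).genR r ⟨e, fun he => h2 (Subtype.ext he)⟩) :
    ∀ x : (Γ.delete α).R r, g (iα x) = j (g' x) :=
  deletion_contraction_commute_general Γ r α β hαβ iα hiα iβ hiβ pβ hpβ g hg0 hg1 i' hi' p' hp' g'
    hg0' hg1' j hj
end
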